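/- Let 𝒳 ⊂ ℝ^d be compact and Q a Borel probability measure on 𝒳. For ε > 0 set A_ε := {x ∈ 𝒳 : δ(x) ≤ ε}, where δ(x) is the Euclidean distance from x to 𝒳ᶜ. Then Condition (A), namely sup_{L>0} L^{1/d} ∫_𝒳 exp(−L·δ(x)^d) dQ(x) < ∞, holds if and only if limsup_{ε↓0} Q(A_ε)/ε < ∞. -/

import Mathlib

open MeasureTheory ProbabilityTheory Filter Set
open scoped ENNReal NNReal Classical

noncomputable section

abbrev Euc (d : ℕ) : Type := EuclideanSpace ℝ (Fin d)

/-- Condition (A). -/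
def CondA {d : ℕ} (𝒳 : Set (Euc d)) (Q : Measure (Euc d)) : Prop :=
  ∃ M : ℝ, ∀ L : ℝ, 0 < L →
    L ^ ((1 : ℝ) / d) * ∫ x, Real.exp (-L * Metric.infDist x 𝒳ᶜ ^ d) ∂Q ≤ M

/-- Proposition 3: for compact 𝒳 and a Borel probability measure Q on 𝒳,
Condition (A) holds iff `limsup_{ε↓0} Q(A_ε)/ε < ∞`, where `A_ε = {x ∈ 𝒳 : δ(x) ≤ ε}`. -/
theorem statement15 {d : ℕ} (hd : 1 ≤ d) (𝒳 : Set (Euc d)) (hcomp : IsCompact 𝒳)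
    (Q : Measure (Euc d)) [IsProbabilityMeasure Q] (hQsupp : Q 𝒳 = 1) :
    CondA 𝒳 Q ↔
      Filter.limsup
        (fun ε : ℝ => Q {x | x ∈ 𝒳 ∧ Metric.infDist x 𝒳ᶜ ≤ ε} / ENNReal.ofReal ε)
        (nhdsWithin 0 (Set.Ioi 0)) < ⊤ := by
  have hd0 : (d : ℝ) ≠ 0 := by
    have : (0:ℝ) < d := by exact_mod_cast hd
    exact this.ne'
  set δ : Euc d → ℝ := fun x => Metric.infDist x 𝒳ᶜ with hδdef
  have hδc : Continuous δ := Metric.continuous_infDist_pt _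
  have hδ0 : ∀ x, 0 ≤ δ x := fun x => Metric.infDist_nonneg
  have h𝒳m : MeasurableSet 𝒳 := hcomp.isClosed.measurableSet
  have hAm : ∀ ε : ℝ, MeasurableSet {x | x ∈ 𝒳 ∧ δ x ≤ ε} := by
    intro ε
    exact h𝒳m.inter (measurableSet_le hδc.measurable measurable_const)
  -- continuity of the integrand
  have hgc : ∀ L : ℝ, Continuous fun x => Real.exp (-L * δ x ^ d) :=
    fun L => Real.continuous_exp.comp (continuous_const.mul (hδc.pow d))
  have hg_int : ∀ L : ℝ, 0 < L → Integrable (fun x => Real.exp (-L * δ x ^ d)) Q := by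
    intro L hL
    refine (integrable_const (1:ℝ)).mono' (hgc L).aestronglyMeasurable ?_
    filter_upwards with x
    rw [Real.norm_eq_abs, abs_of_pos (Real.exp_pos _)]
    apply Real.exp_le_one_iff.2
    have : 0 ≤ δ x ^ d := pow_nonneg (hδ0 x) d
    nlinarith
  constructor
  · rintro ⟨M, hM⟩
    have hM0 : 0 ≤ M := by
      have h1 := hM 1 one_pos
      have h2 : 0 ≤ ∫ x, Real.exp (-1 * δ x ^ d) ∂Q :=
        integral_nonneg fun x => (Real.exp_pos _).le
      rw [Real.one_rpow, one_mul] at h1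
      linarith
    have key : ∀ ε : ℝ, 0 < ε →
        Q {x | x ∈ 𝒳 ∧ δ x ≤ ε} / ENNReal.ofReal ε ≤ ENNReal.ofReal (Real.exp 1 * M) := by
      intro ε hε
      set A := {x | x ∈ 𝒳 ∧ δ x ≤ ε} with hA
      have hL : (0:ℝ) < ε⁻¹ ^ d := by positivity
      have hM' := hM _ hL
      have hpow : ((ε⁻¹ ^ d : ℝ)) ^ ((1:ℝ)/d) = ε⁻¹ := by
        rw [← Real.rpow_natCast ε⁻¹ d, ← Real.rpow_mul (by positivity),
          mul_one_div, div_self hd0, Real.rpow_one]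
      rw [hpow] at hM'
      -- lower bound on the integral
      have hle : ∀ x, A.indicator (fun _ => Real.exp (-1)) x
          ≤ Real.exp (-(ε⁻¹ ^ d) * δ x ^ d) := by
        intro x
        by_cases hx : x ∈ A
        · rw [indicator_of_mem hx]
          apply Real.exp_le_exp.2
          have h1 : δ x ^ d ≤ ε ^ d := pow_le_pow_left₀ (hδ0 x) hx.2 d
          have h2 : ε⁻¹ ^ d * δ x ^ d ≤ ε⁻¹ ^ d * ε ^ d :=
            mul_le_mul_of_nonneg_left h1 (le_of_lt hL)
          have h3 : ε⁻¹ ^ d * ε ^ d = 1 := by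
            rw [← mul_pow, inv_mul_cancel₀ hε.ne', one_pow]
          nlinarith
        · rw [indicator_of_notMem hx]
          exact (Real.exp_pos _).le
      have hind_int : Integrable (A.indicator fun _ => Real.exp (-1)) Q :=
        (integrable_const _).indicator (hAm ε)
      have hmono : ∫ x, A.indicator (fun _ => Real.exp (-1)) x ∂Q
          ≤ ∫ x, Real.exp (-(ε⁻¹ ^ d) * δ x ^ d) ∂Q :=
        integral_mono hind_int (hg_int _ hL) hle
      rw [integral_indicator_const _ (hAm ε)] at hmono
      -- hmono : (Q A).toReal • exp(-1) ≤ ∫ ...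
      have hQfin : Q A ≠ ⊤ := (measure_lt_top Q A).ne
      have hbound : (Q A).toReal ≤ Real.exp 1 * M * ε := by
        have h4 : ε⁻¹ * ((Q A).toReal * Real.exp (-1)) ≤ M := by
          calc ε⁻¹ * ((Q A).toReal * Real.exp (-1))
              ≤ ε⁻¹ * ∫ x, Real.exp (-(ε⁻¹ ^ d) * δ x ^ d) ∂Q := by
                apply mul_le_mul_of_nonneg_left _ (by positivity)
                simpa [measureReal_def] using hmono
            _ ≤ M := hM'
        have h5 : Real.exp (-1) = (Real.exp 1)⁻¹ := by
          rw [Real.exp_neg]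
        have hexp : (0:ℝ) < Real.exp 1 := Real.exp_pos 1
        have h6 : (Q A).toReal * Real.exp (-1) ≤ M * ε := by
          have := mul_le_mul_of_nonneg_left h4 hε.le
          rw [← mul_assoc, mul_inv_cancel₀ hε.ne', one_mul] at this
          linarith [this]
        calc (Q A).toReal = Real.exp 1 * ((Q A).toReal * Real.exp (-1)) := by
              rw [h5]; field_simp
          _ ≤ Real.exp 1 * (M * ε) := mul_le_mul_of_nonneg_left h6 hexp.le
          _ = Real.exp 1 * M * ε := by ring
      have hQle : Q A ≤ ENNReal.ofReal (Real.exp 1 * M * ε) := by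
        rw [← ENNReal.ofReal_toReal hQfin]
        exact ENNReal.ofReal_le_ofReal hbound
      rw [ENNReal.div_le_iff (by simp [hε.ne', hε]) (by simp)]
      calc Q A ≤ ENNReal.ofReal (Real.exp 1 * M * ε) := hQle
        _ = ENNReal.ofReal (Real.exp 1 * M) * ENNReal.ofReal ε := by
            rw [← ENNReal.ofReal_mul (by nlinarith [Real.exp_pos 1])]
      -- done
    have : limsup (fun ε : ℝ => Q {x | x ∈ 𝒳 ∧ δ x ≤ ε} / ENNReal.ofReal ε)
        (nhdsWithin 0 (Set.Ioi 0)) ≤ ENNReal.ofReal (Real.exp 1 * M) := by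
      apply limsup_le_of_le
      · isBoundedDefault
      · filter_upwards [self_mem_nhdsWithin] with ε hε
        exact key ε hε
    exact lt_of_le_of_lt this ENNReal.ofReal_lt_top
  · intro hlim
    -- extract eventual bound
    set f : ℝ → ℝ≥0∞ := fun ε => Q {x | x ∈ 𝒳 ∧ δ x ≤ ε} / ENNReal.ofReal ε with hf
    set b : ℝ≥0∞ := limsup f (nhdsWithin 0 (Set.Ioi 0)) + 1 with hb
    have hbtop : b ≠ ⊤ := by
      rw [hb]
      exact ENNReal.add_ne_top.2 ⟨hlim.ne, ENNReal.one_ne_top⟩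
    have hev : ∀ᶠ ε in nhdsWithin 0 (Set.Ioi 0), f ε < b :=
      eventually_lt_of_limsup_lt (by rw [hb]; exact ENNReal.lt_add_right hlim.ne one_ne_zero)
    rw [eventually_nhdsWithin_iff] at hev
    rw [Metric.eventually_nhds_iff] at hev
    obtain ⟨ε₀, hε₀, hevball⟩ := hev
    -- uniform linear bound Q(A ε) ≤ C' ε for all ε > 0
    set C' : ℝ := max b.toReal ε₀⁻¹ with hC'
    have hC'pos : 0 < C' := lt_of_lt_of_le (by positivity) (le_max_right _ _)
    have hQA : ∀ ε : ℝ, 0 < ε → Q {x | x ∈ 𝒳 ∧ δ x ≤ ε} ≤ ENNReal.ofReal (C' * ε) := by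
      intro ε hε
      by_cases hcase : ε < ε₀
      · have hb' : f ε < b := by
          apply hevball (by simpa [abs_of_pos hε] using hcase) (by exact hε)
        have hdiv : Q {x | x ∈ 𝒳 ∧ δ x ≤ ε} ≤ b * ENNReal.ofReal ε := by
          rw [← ENNReal.div_le_iff (by simp [hε.ne', hε]) (by simp)]
          exact hb'.le
        calc Q {x | x ∈ 𝒳 ∧ δ x ≤ ε} ≤ b * ENNReal.ofReal ε := hdiv
          _ = ENNReal.ofReal (b.toReal * ε) := by
              rw [ENNReal.ofReal_mul ENNReal.toReal_nonneg, ENNReal.ofReal_toReal hbtop]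
          _ ≤ ENNReal.ofReal (C' * ε) := by
              apply ENNReal.ofReal_le_ofReal
              exact mul_le_mul_of_nonneg_right (le_max_left _ _) hε.le
      · push_neg at hcase
        have h1 : (1:ℝ) ≤ ε₀⁻¹ * ε := by
          rw [mul_comm, ← div_eq_mul_inv]
          exact (one_le_div hε₀).2 hcase
        calc Q {x | x ∈ 𝒳 ∧ δ x ≤ ε} ≤ 1 := prob_le_one
          _ = ENNReal.ofReal 1 := by simp
          _ ≤ ENNReal.ofReal (ε₀⁻¹ * ε) := ENNReal.ofReal_le_ofReal h1
          _ ≤ ENNReal.ofReal (C' * ε) := by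
              apply ENNReal.ofReal_le_ofReal
              exact mul_le_mul_of_nonneg_right (le_max_right _ _) hε.le
    -- geometric series constant
    set r : ℝ := 2 * Real.exp (-1) with hr
    have hr0 : 0 ≤ r := by positivity
    have hr1 : r < 1 := by
      have h2e : (2:ℝ) < Real.exp 1 := by
        have := Real.exp_one_gt_d9
        linarith
      rw [hr, Real.exp_neg]
      rw [mul_inv_lt_iff₀ (Real.exp_pos 1)]
      linarith
    set G : ℝ≥0∞ := (1 - ENNReal.ofReal r)⁻¹ with hG
    have hGtop : G ≠ ⊤ := by
      rw [hG, ENNReal.inv_ne_top]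
      intro h
      rw [tsub_eq_zero_iff_le] at h
      exact absurd (lt_of_le_of_lt h (ENNReal.ofReal_lt_one.2 hr1)) (lt_irrefl _)
    refine ⟨C' * G.toReal, ?_⟩
    intro L hL
    have hLd : (0:ℝ) < L ^ ((1:ℝ)/d) := Real.rpow_pos_of_pos hL _
    -- a.e. membership in 𝒳
    have h𝒳c : Q 𝒳ᶜ = 0 := by
      have := measure_compl h𝒳m (measure_ne_top Q 𝒳)
      rw [hQsupp, measure_univ] at this
      simpa using this
    have hae : ∀ᵐ x ∂Q, x ∈ 𝒳 := by
      rw [ae_iff]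
      exact h𝒳c
    -- the dominating series
    set εk : ℕ → ℝ := fun k => (((k:ℝ) + 1)/L) ^ ((1:ℝ)/d) with hεk
    have hεkpos : ∀ k, 0 < εk k := by
      intro k
      exact Real.rpow_pos_of_pos (div_pos (by positivity) hL) _
    set F : ℕ → Euc d → ℝ≥0∞ := fun k =>
      ({x | x ∈ 𝒳 ∧ δ x ≤ εk k}).indicator (fun _ => ENNReal.ofReal (Real.exp (-(k:ℝ)))) with hF
    have hpt : ∀ x ∈ 𝒳, ENNReal.ofReal (Real.exp (-L * δ x ^ d)) ≤ ∑' k : ℕ, F k x := by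
      intro x hx
      set k : ℕ := ⌊L * δ x ^ d⌋₊ with hk
      have hnn : 0 ≤ L * δ x ^ d := mul_nonneg hL.le (pow_nonneg (hδ0 x) d)
      have h1 : (k:ℝ) ≤ L * δ x ^ d := Nat.floor_le hnn
      have h2 : L * δ x ^ d < (k:ℝ) + 1 := Nat.lt_floor_add_one _
      have hxA : x ∈ {x | x ∈ 𝒳 ∧ δ x ≤ εk k} := by
        refine ⟨hx, ?_⟩
        have hδd : δ x ^ d ≤ ((k:ℝ) + 1)/L := by
          rw [le_div_iff₀ hL]
          nlinarith
        calc δ x = (δ x ^ d) ^ ((1:ℝ)/d) := by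
              rw [← Real.rpow_natCast (δ x) d, ← Real.rpow_mul (hδ0 x),
                mul_one_div, div_self hd0, Real.rpow_one]
          _ ≤ (((k:ℝ) + 1)/L) ^ ((1:ℝ)/d) := by
              apply Real.rpow_le_rpow (pow_nonneg (hδ0 x) d) hδd (by positivity)
      have hstep : ENNReal.ofReal (Real.exp (-L * δ x ^ d)) ≤ F k x := by
        rw [hF]
        simp only [indicator_of_mem hxA]
        apply ENNReal.ofReal_le_ofReal
        apply Real.exp_le_exp.2
        nlinarith
      exact hstep.trans (ENNReal.le_tsum k)
    have hFmeas : ∀ k, Measurable (F k) := by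
      intro k
      exact measurable_const.indicator (hAm (εk k))
    -- bound the lintegral
    have hlint : ∫⁻ x, ENNReal.ofReal (Real.exp (-L * δ x ^ d)) ∂Q
        ≤ ENNReal.ofReal (C' / L ^ ((1:ℝ)/d)) * G := by
      calc ∫⁻ x, ENNReal.ofReal (Real.exp (-L * δ x ^ d)) ∂Q
          ≤ ∫⁻ x, ∑' k, F k x ∂Q := by
            apply lintegral_mono_ae
            filter_upwards [hae] with x hx using hpt x hx
        _ = ∑' k : ℕ, ∫⁻ x, F k x ∂Q := lintegral_tsum (fun k => (hFmeas k).aemeasurable)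
        _ = ∑' k : ℕ, ENNReal.ofReal (Real.exp (-(k:ℝ))) * Q {x | x ∈ 𝒳 ∧ δ x ≤ εk k} := by
            congr 1
            funext k
            simp only [hF]
            rw [lintegral_indicator (hAm (εk k)), setLIntegral_const]
        _ ≤ ∑' k : ℕ, ENNReal.ofReal (C' / L ^ ((1:ℝ)/d) * r ^ k) := by
            apply ENNReal.tsum_le_tsum
            intro k
            calc ENNReal.ofReal (Real.exp (-(k:ℝ))) * Q {x | x ∈ 𝒳 ∧ δ x ≤ εk k}
                ≤ ENNReal.ofReal (Real.exp (-(k:ℝ))) * ENNReal.ofReal (C' * εk k) :=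
                  mul_le_mul_right (hQA _ (hεkpos k)) _
              _ = ENNReal.ofReal (Real.exp (-(k:ℝ)) * (C' * εk k)) := by
                  rw [← ENNReal.ofReal_mul (Real.exp_pos _).le]
              _ ≤ ENNReal.ofReal (C' / L ^ ((1:ℝ)/d) * r ^ k) := by
                  apply ENNReal.ofReal_le_ofReal
                  -- key real inequality
                  have hek : Real.exp (-(k:ℝ)) = Real.exp (-1) ^ k := by
                    rw [← Real.exp_nat_mul]
                    congr 1
                    ring
                  have hεk_le : εk k ≤ ((k:ℝ) + 1) / L ^ ((1:ℝ)/d) := by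
                    simp only [hεk]
                    rw [Real.div_rpow (by positivity) hL.le]
                    rw [div_le_div_iff_of_pos_right hLd]
                    calc ((k:ℝ) + 1) ^ ((1:ℝ)/d)
                        ≤ ((k:ℝ) + 1) ^ (1:ℝ) := by
                          apply Real.rpow_le_rpow_of_exponent_le (by simp [Nat.cast_nonneg] : (1:ℝ) ≤ (k:ℝ) + 1)
                          rw [div_le_one (by positivity)]
                          exact_mod_cast hd
                      _ = (k:ℝ) + 1 := Real.rpow_one _
                  have hk2 : ((k:ℝ) + 1) ≤ 2 ^ k := by
                    have := @Nat.lt_two_pow_self k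
                    exact_mod_cast Nat.succ_le_of_lt this
                  calc Real.exp (-(k:ℝ)) * (C' * εk k)
                      ≤ Real.exp (-(k:ℝ)) * (C' * (((k:ℝ) + 1) / L ^ ((1:ℝ)/d))) := by
                        apply mul_le_mul_of_nonneg_left _ (Real.exp_pos _).le
                        exact mul_le_mul_of_nonneg_left hεk_le hC'pos.le
                    _ = C' / L ^ ((1:ℝ)/d) * (Real.exp (-1) ^ k * ((k:ℝ) + 1)) := by
                        rw [hek]; ring
                    _ ≤ C' / L ^ ((1:ℝ)/d) * (Real.exp (-1) ^ k * 2 ^ k) := by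
                        apply mul_le_mul_of_nonneg_left _ (by positivity)
                        exact mul_le_mul_of_nonneg_left hk2 (by positivity)
                    _ = C' / L ^ ((1:ℝ)/d) * r ^ k := by
                        rw [hr, mul_pow]
                        ring
        _ = ENNReal.ofReal (C' / L ^ ((1:ℝ)/d)) * G := by
            have : ∀ k : ℕ, ENNReal.ofReal (C' / L ^ ((1:ℝ)/d) * r ^ k)
                = ENNReal.ofReal (C' / L ^ ((1:ℝ)/d)) * ENNReal.ofReal r ^ k := by
              intro k
              rw [ENNReal.ofReal_mul (by positivity), ENNReal.ofReal_pow hr0]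
            simp_rw [this]
            rw [ENNReal.tsum_mul_left, ENNReal.tsum_geometric, hG]
    -- convert to the real integral
    have hinteq : ∫ x, Real.exp (-L * δ x ^ d) ∂Q
        = (∫⁻ x, ENNReal.ofReal (Real.exp (-L * δ x ^ d)) ∂Q).toReal := by
      apply integral_eq_lintegral_of_nonneg_ae
      · filter_upwards with x using (Real.exp_pos _).le
      · exact (hgc L).aestronglyMeasurable
    have hRHStop : ENNReal.ofReal (C' / L ^ ((1:ℝ)/d)) * G ≠ ⊤ :=
      ENNReal.mul_ne_top ENNReal.ofReal_ne_top hGtop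
    have hintle : ∫ x, Real.exp (-L * δ x ^ d) ∂Q ≤ C' / L ^ ((1:ℝ)/d) * G.toReal := by
      rw [hinteq]
      calc (∫⁻ x, ENNReal.ofReal (Real.exp (-L * δ x ^ d)) ∂Q).toReal
          ≤ (ENNReal.ofReal (C' / L ^ ((1:ℝ)/d)) * G).toReal :=
            ENNReal.toReal_mono hRHStop hlint
        _ = C' / L ^ ((1:ℝ)/d) * G.toReal := by
            rw [ENNReal.toReal_mul, ENNReal.toReal_ofReal (by positivity)]
    calc L ^ ((1:ℝ)/d) * ∫ x, Real.exp (-L * δ x ^ d) ∂Q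
        ≤ L ^ ((1:ℝ)/d) * (C' / L ^ ((1:ℝ)/d) * G.toReal) :=
          mul_le_mul_of_nonneg_left hintle hLd.le
      _ = C' * G.toReal := by
          field_simp
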